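/- If M is an unbounded graph matroid family and G is an M-reconstructible graph (without isolated vertices) with at least two edges, then the matroid M(G) has no bridges (coloops). -/

import Mathlib

/-!
Common framework: graph matroid families.

A finite simple graph (without isolated vertices) is identified with its edge
set: a finite set of non-diagonal elements of `Sym2 ℕ`.  A graph matroid
family is encoded, following the paper, as a finitary matroid on the edge set
of the countable complete graph on `ℕ` that is invariant under all
permutations of `ℕ`.
-/

/-- The set of vertices covered by a set of edges. -/
def eSupp (E : Set (Sym2 ℕ)) : Set ℕ := {v : ℕ | ∃ e ∈ E, v ∈ e}

/-- The edge set of the complete graph on the vertex set `V`. -/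
def clique (V : Set ℕ) : Set (Sym2 ℕ) := {e : Sym2 ℕ | ¬ e.IsDiag ∧ ∀ v ∈ e, v ∈ V}

/-- The edge set of the complete graph `K_n` on the vertices `0, …, n-1`. -/
def cliqueN (n : ℕ) : Set (Sym2 ℕ) := clique {v : ℕ | v < n}

/-- `E` is (the edge set of) a finite simple graph. -/
def IsGraph (E : Set (Sym2 ℕ)) : Prop := E.Finite ∧ ∀ e ∈ E, ¬ e.IsDiag

/-- The degree of the vertex `v` in the edge set `E`. -/
noncomputable def deg (E : Set (Sym2 ℕ)) (v : ℕ) : ℕ := {e ∈ E | v ∈ e}.ncard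

/-- The minimum degree of (the graph with) edge set `E` (whose vertex set is `eSupp E`). -/
noncomputable def minDeg (E : Set (Sym2 ℕ)) : ℕ := sInf {k : ℕ | ∃ v ∈ eSupp E, deg E v = k}

/-- Deleting a set `S` of vertices from the graph with edge set `E`. -/
def deleteVerts (E : Set (Sym2 ℕ)) (S : Set ℕ) : Set (Sym2 ℕ) := {e ∈ E | ∀ v ∈ e, v ∉ S}

/-- The graph with edge set `E` is `k`-connected: it has more than `k` vertices and
deleting any set of fewer than `k` vertices leaves a connected graph. -/
def KConnected (k : ℕ) (E : Set (Sym2 ℕ)) : Prop :=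
  k < (eSupp E).ncard ∧
  ∀ S : Finset ℕ, S.card < k →
    ((SimpleGraph.fromEdgeSet E).induce (eSupp E \ ↑S)).Connected

/-- `E` is a forest. -/
def IsForest (E : Set (Sym2 ℕ)) : Prop := (SimpleGraph.fromEdgeSet E).IsAcyclic

/-- `E` is a matching: no two distinct edges of `E` share a vertex. -/
def IsMatching (E : Set (Sym2 ℕ)) : Prop :=
  ∀ e ∈ E, ∀ f ∈ E, e ≠ f → ∀ v : ℕ, v ∈ e → v ∉ f

/-- `E` is a star `K_{1,m}` with `m` edges. -/
def IsStar (m : ℕ) (E : Set (Sym2 ℕ)) : Prop :=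
  ∃ (c : ℕ) (L : Finset ℕ), c ∉ L ∧ L.card = m ∧ E = (fun x => s(c, x)) '' ↑L

/-- `C` is a cycle graph `C_n` for some `n ≥ 3`. -/
def IsCycleGraph (C : Set (Sym2 ℕ)) : Prop :=
  ∃ n : ℕ, 3 ≤ n ∧ ∃ f : ZMod n → ℕ, Function.Injective f ∧
    C = {e : Sym2 ℕ | ∃ i : ZMod n, e = s(f i, f (i + 1))}

/-- The rank of the set `X` in the matroid `M₀`: the supremum of the cardinalities of
independent subsets of `X` (as a natural number; all sets we use are finite). -/
noncomputable def mrk (M₀ : Matroid (Sym2 ℕ)) (X : Set (Sym2 ℕ)) : ℕ :=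
  sSup {n : ℕ | ∃ I ⊆ X, M₀.Indep I ∧ I.ncard = n}

/-- A vertical `k`-separation of the matroid `M₀`. -/
def VerticalSep (M₀ : Matroid (Sym2 ℕ)) (k : ℕ) (E₁ E₂ : Set (Sym2 ℕ)) : Prop :=
  Disjoint E₁ E₂ ∧ E₁ ∪ E₂ = M₀.E ∧
  k ≤ mrk M₀ E₁ ∧ k ≤ mrk M₀ E₂ ∧
  mrk M₀ E₁ + mrk M₀ E₂ + 1 ≤ mrk M₀ M₀.E + k

/-- The matroid `M₀` is vertically `k`-connected. -/
def VerticallyConnected (M₀ : Matroid (Sym2 ℕ)) (k : ℕ) : Prop :=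
  k ≤ mrk M₀ M₀.E ∧
  ∀ k' : ℕ, 0 < k' → k' < k → ∀ E₁ E₂ : Set (Sym2 ℕ), ¬ VerticalSep M₀ k' E₁ E₂

/-- A `d`-dimensional abstract rigidity matroid on the complete graph with vertex set `V`. -/
def IsARM (d : ℕ) (V : Set ℕ) (M₀ : Matroid (Sym2 ℕ)) : Prop :=
  M₀.E = clique V ∧
  (∀ E₁ E₂ : Set (Sym2 ℕ), E₁ ⊆ clique V → E₂ ⊆ clique V →
      (eSupp E₁ ∩ eSupp E₂).ncard < d →
      M₀.closure (E₁ ∪ E₂) = M₀.closure E₁ ∪ M₀.closure E₂) ∧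
  (∀ E₁ E₂ : Set (Sym2 ℕ), E₁ ⊆ clique V → E₂ ⊆ clique V →
      d ≤ (eSupp E₁ ∩ eSupp E₂).ncard →
      M₀.closure E₁ = clique (eSupp E₁) → M₀.closure E₂ = clique (eSupp E₂) →
      M₀.closure (E₁ ∪ E₂) = clique (eSupp E₁ ∪ eSupp E₂))

/-- The `d`-dimensional edge split operation: replace an edge `uv` of `G` by a new
vertex `w` joined to `u` and `v`, as well as to `d - 1` other vertices of `G`. -/
def EdgeSplit (d : ℕ) (G G' : Set (Sym2 ℕ)) : Prop :=
  ∃ (u v w : ℕ) (X : Finset ℕ),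
    s(u, v) ∈ G ∧ w ∉ eSupp G ∧ ↑X ⊆ eSupp G ∧ X.card = d - 1 ∧ u ∉ X ∧ v ∉ X ∧
    G' = (G \ {s(u, v)}) ∪ {s(w, u), s(w, v)} ∪ ((fun x => s(w, x)) '' ↑X)

/-- A graph matroid family: a finitary matroid on the edge set of the countable
complete graph on `ℕ`, invariant under all permutations of `ℕ`. -/
structure GraphMatroidFamily where
  /-- The underlying matroid on the edge set of `K_ℕ`. -/
  M : Matroid (Sym2 ℕ)
  ground_eq : M.E = {e : Sym2 ℕ | ¬ e.IsDiag}
  finitary : M.Finitary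
  invariant : ∀ σ : Equiv.Perm ℕ, ∀ I : Set (Sym2 ℕ),
    M.Indep I → M.Indep (Sym2.map σ '' I)

namespace GraphMatroidFamily

variable (M : GraphMatroidFamily)

/-- The rank function of the family: `M.rk E` is the rank of the matroid `M(G)` for
any graph `G` whose edge set contains `E`. -/
noncomputable def rk (E : Set (Sym2 ℕ)) : ℕ := mrk M.M E

/-- A set of edges (a graph) is `M`-independent. -/
def Indep (E : Set (Sym2 ℕ)) : Prop := M.M.Indep E

/-- `C` is an `M`-circuit: a graph that is not `M`-independent, but such that deleting
any single edge from it yields an `M`-independent graph. -/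
def IsCircuit (C : Set (Sym2 ℕ)) : Prop :=
  IsGraph C ∧ ¬ M.Indep C ∧ ∀ e ∈ C, M.Indep (C \ {e})

/-- The graph with edge set `E` is `M`-rigid. -/
def Rigid (E : Set (Sym2 ℕ)) : Prop := M.rk E = M.rk (clique (eSupp E))

/-- The graph with vertex set `V` and edge set `E` is `M`-rigid. -/
def RigidOn (V : Set ℕ) (E : Set (Sym2 ℕ)) : Prop := M.rk E = M.rk (clique V)

/-- `M` is trivial if every (finite, simple) graph is `M`-independent. -/
def Trivial : Prop := ∀ E : Set (Sym2 ℕ), IsGraph E → M.Indep E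

/-- `M` is unbounded: the sequence `r(K_n)` is unbounded. -/
def Unbounded : Prop := ∀ B : ℕ, ∃ n : ℕ, B < M.rk (cliqueN n)

/-- `M` is bounded: the sequence `r(K_n)` is bounded. -/
def Bounded : Prop := ∃ B : ℕ, ∀ n : ℕ, M.rk (cliqueN n) ≤ B

/-- For a bounded family, `m` is the rank `r(M)` of `M`: the maximum (limit) of the
monotone sequence `r(K_n)`. -/
def HasRank (m : ℕ) : Prop :=
  (∀ n : ℕ, M.rk (cliqueN n) ≤ m) ∧ ∃ n : ℕ, M.rk (cliqueN n) = m

/-- `d` is the dimensionality of (the nontrivial family) `M`: the least `d` such that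
there is an `M`-circuit with minimum degree `d + 1`. -/
def IsDimensionality (d : ℕ) : Prop :=
  IsLeast {d : ℕ | ∃ C, M.IsCircuit C ∧ minDeg C = d + 1} d

/-- `t` is the threshold of (the nontrivial family) `M` with dimensionality `d`:
the least value of `|V(C)| - 1` over all `M`-circuits `C` with minimum degree `d + 1`. -/
def IsThreshold (d t : ℕ) : Prop :=
  IsLeast {t : ℕ | ∃ C, M.IsCircuit C ∧ minDeg C = d + 1 ∧ (eSupp C).ncard = t + 1} t

/-- `M` has the Lovász–Yemini property. -/
def LovaszYemini : Prop :=
  ∃ c : ℕ, ∀ E : Set (Sym2 ℕ), IsGraph E → KConnected c E → M.Rigid E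

/-- `ψ` is an isomorphism between the matroids `M(G)` and `M(H)`. -/
def MatroidIso (G H : Set (Sym2 ℕ)) (ψ : Sym2 ℕ → Sym2 ℕ) : Prop :=
  Set.BijOn ψ G H ∧ ∀ S ⊆ G, (M.Indep S ↔ M.Indep (ψ '' S))

/-- `G` is `M`-reconstructible: every isomorphism between `M(G)` and `M(H)` (for a graph
`H` without isolated vertices) is induced by a graph isomorphism. -/
def Reconstructible (G : Set (Sym2 ℕ)) : Prop :=
  ∀ H : Set (Sym2 ℕ), IsGraph H → ∀ ψ : Sym2 ℕ → Sym2 ℕ, M.MatroidIso G H ψ →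
    ∃ φ : ℕ → ℕ, Set.BijOn φ (eSupp G) (eSupp H) ∧ ∀ e ∈ G, ψ e = Sym2.map φ e

/-- `M` has the Whitney property. -/
def Whitney : Prop :=
  ∃ c : ℕ, ∀ E : Set (Sym2 ℕ), IsGraph E → KConnected c E → M.Reconstructible E

/-- `M` is the union of the graph matroid families `Ms`. -/
def IsUnionOf {k : ℕ} (Ms : Fin k → GraphMatroidFamily) : Prop :=
  ∀ I : Set (Sym2 ℕ),
    M.Indep I ↔ ∃ Is : Fin k → Set (Sym2 ℕ), (∀ i, (Ms i).Indep (Is i)) ∧ I = ⋃ i, Is i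

/-- `M` is a family of `d`-dimensional abstract rigidity matroids. -/
def FamilyOfARM (d : ℕ) : Prop :=
  ∀ n : ℕ, d ≤ n → IsARM d {v : ℕ | v < n} (M.M.restrict (cliqueN n))

/-- `M` is `1`-extendable: its dimensionality `d` is finite and positive, and the
`d`-dimensional edge split operation preserves `M`-independence. -/
def OneExtendable : Prop :=
  ∃ d : ℕ, 0 < d ∧ M.IsDimensionality d ∧
    ∀ G G' : Set (Sym2 ℕ), IsGraph G → M.Indep G → EdgeSplit d G G' → M.Indep G'

/-- `G` is `k`-vertex-redundantly `M`-rigid. -/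
def VertexRedundantlyRigid (k : ℕ) (G : Set (Sym2 ℕ)) : Prop :=
  M.Rigid G ∧ ∀ S : Finset ℕ, ↑S ⊆ eSupp G → S.card ≤ k →
    M.RigidOn (eSupp G \ ↑S) (deleteVerts G ↑S)

end GraphMatroidFamily

/-!
If an edge `e` of `G` lies in no `M`-circuit of `G`, it is a bridge of `M(G)`. In an unbounded
family an edge with a new end vertex is a bridge of every graph it is added to, so moving `e` to
such a position gives a graph `H` with `M(H) ≅ M(G)` via the obvious edge bijection. By
reconstructibility `H ≅ G`, yet the new position can be chosen to change the number of vertices: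
away from the other edges if `e` meets one of them, pendant at a vertex of another edge if `e` is
isolated.
-/

open Set

theorem exists_perm_eqOn_of_injOn {α : Type*} {A : Set α} (hA : A.Finite) {f : α → α}
    (hf : InjOn f A) : ∃ σ : Equiv.Perm α, EqOn σ f A := by
  classical
  have hcompl : Cardinal.mk ↥(Aᶜ) = Cardinal.mk ↥((f '' A)ᶜ) := by
    have hcard : Cardinal.mk A = Cardinal.mk (f '' A) := (Cardinal.mk_image_eq_of_injOn f A hf).symm
    cases finite_or_infinite α
    · exact Cardinal.mk_compl_eq_mk_compl_finite_same hcard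
    · exact Cardinal.mk_compl_eq_mk_compl_infinite (Cardinal.lt_aleph0_iff_set_finite.mpr hA
        |>.trans_le (Cardinal.aleph0_le_mk α))
        (Cardinal.lt_aleph0_iff_set_finite.mpr (hA.image f) |>.trans_le (Cardinal.aleph0_le_mk α))
  obtain ⟨e₁⟩ := Cardinal.eq.mp hcompl
  obtain ⟨σ, hσ⟩ := (Equiv.Set.compl (Equiv.Set.imageOfInjOn f A hf)).symm e₁
  exact ⟨σ, fun a ha => by simpa [Equiv.Set.imageOfInjOn] using hσ ⟨a, ha⟩⟩

theorem Matroid.Indep.encard_le_of_subset_closure {α : Type*} {M : Matroid α} {J X : Set α}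
    (hJ : M.Indep J) (hJX : J ⊆ M.closure X) : J.encard ≤ X.encard :=
  (hJ.encard_le_eRk_of_subset hJX).trans ((M.eRk_closure_eq X).le.trans (M.eRk_le_encard X))

theorem eSupp_mono {A B : Set (Sym2 ℕ)} (h : A ⊆ B) : eSupp A ⊆ eSupp B :=
  fun _ ⟨e, he, hv⟩ => ⟨e, h he, hv⟩

theorem eSupp_finite {E : Set (Sym2 ℕ)} (hE : E.Finite) : (eSupp E).Finite := by
  have : eSupp E = ⋃ e ∈ E, {v | v ∈ e} := by ext; simp [eSupp]
  rw [this]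
  exact hE.biUnion fun e _ =>
    e.ind fun a b => (toFinite {a, b}).subset fun v hv => by simpa using hv

theorem eSupp_insert (a b : ℕ) (E : Set (Sym2 ℕ)) :
    eSupp (insert s(a, b) E) = {a, b} ∪ eSupp E := by
  ext v
  simp [eSupp, or_and_right, exists_or]

theorem eSupp_nonempty {E : Set (Sym2 ℕ)} (hE : E.Nonempty) : (eSupp E).Nonempty := by
  obtain ⟨e, he⟩ := hE
  induction e using Sym2.ind with
  | _ a b => exact ⟨a, s(a, b), he, Sym2.mem_mk_left a b⟩

theorem image_map_eq_self {σ : ℕ → ℕ} {E : Set (Sym2 ℕ)}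
    (h : ∀ v ∈ eSupp E, σ v = v) : Sym2.map σ '' E = E := by
  conv_rhs => rw [← image_id E]
  exact image_congr fun e he => (Sym2.map_congr fun v hv => h v ⟨e, he, hv⟩).trans
    (congrFun Sym2.map_id e)

theorem map_mem_clique {σ : ℕ → ℕ} (hσ : σ.Injective) {V W : Set ℕ} (hVW : MapsTo σ V W)
    {e : Sym2 ℕ} (he : e ∈ clique V) : Sym2.map σ e ∈ clique W := by
  refine ⟨(Sym2.isDiag_map hσ).not.mpr he.1, fun w hw => ?_⟩
  obtain ⟨v, hv, rfl⟩ := Sym2.mem_map.mp hw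
  exact hVW (he.2 v hv)

theorem exists_ncard_eSupp_insert_ne {F : Set (Sym2 ℕ)} (hF : F.Finite) (hne : F.Nonempty)
    {a b : ℕ} (hab : a ≠ b) :
    ∃ p x, p ∉ eSupp (insert s(a, b) F) ∧ p ≠ x ∧
      (eSupp (insert s(a, b) F)).ncard ≠ (eSupp (insert s(p, x) F)).ncard := by
  have hV := eSupp_finite hF
  obtain ⟨T, hT, hTcard⟩ :=
    ((eSupp_finite (hF.insert s(a, b)))).infinite_compl.exists_subset_card_eq 2
  obtain ⟨p, q, hpq, rfl⟩ := Finset.card_eq_two.mp hTcard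
  simp only [Finset.coe_insert, Finset.coe_singleton, insert_subset_iff, singleton_subset_iff,
    mem_compl_iff, eSupp_insert, mem_union, mem_insert_iff, mem_singleton_iff, not_or] at hT
  obtain ⟨⟨⟨hpa, hpb⟩, hpV⟩, -, hqV⟩ := hT
  simp only [eSupp_insert, insert_union, singleton_union, mem_insert_iff, not_or]
  by_cases hshared : a ∈ eSupp F ∨ b ∈ eSupp F
  · refine ⟨p, q, ⟨hpa, hpb, hpV⟩, hpq, ?_⟩
    have hle : (insert a (insert b (eSupp F))).ncard ≤ (eSupp F).ncard + 1 := by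
      rcases hshared with h | h
      · rw [insert_eq_of_mem (mem_insert_of_mem b h)]
        exact ncard_insert_le b _
      · rw [insert_eq_of_mem h]
        exact ncard_insert_le a _
    rw [ncard_insert_of_notMem (by simp [hpq, hpV]) (hV.insert q),
      ncard_insert_of_notMem hqV hV]
    omega
  · obtain ⟨hae, hbe⟩ := not_or.mp hshared
    obtain ⟨x, hx⟩ := eSupp_nonempty hne
    refine ⟨p, x, ⟨hpa, hpb, hpV⟩, fun h => hpV (h ▸ hx), ?_⟩
    rw [insert_eq_of_mem hx, ncard_insert_of_notMem hpV hV,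
      ncard_insert_of_notMem (by simp [hab, hae]) (hV.insert b), ncard_insert_of_notMem hbe hV]
    omega

namespace GraphMatroidFamily

variable (M : GraphMatroidFamily)

theorem mem_closure_of_not_indep_insert {I : Set (Sym2 ℕ)} {e : Sym2 ℕ} (hI : M.Indep I)
    (he : ¬ e.IsDiag) (hdep : ¬ M.Indep (insert e I)) : e ∈ M.M.closure I := by
  by_cases heI : e ∈ I
  · exact M.M.subset_closure I hI.subset_ground heI
  by_contra hcl
  exact hdep <| (Matroid.Indep.insert_indep_iff_of_notMem hI heI).mpr
    ⟨by rw [M.ground_eq]; exact he, hcl⟩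

theorem map_mem_closure {I : Set (Sym2 ℕ)} {e : Sym2 ℕ} (hI : M.Indep I) (σ : Equiv.Perm ℕ)
    (he : e ∈ M.M.closure I) : Sym2.map σ e ∈ M.M.closure (Sym2.map σ '' I) := by
  rw [Matroid.Indep.mem_closure_iff' hI] at he
  rw [Matroid.Indep.mem_closure_iff' (M.invariant σ I hI)]
  refine ⟨?_, fun hind => ?_⟩
  · have := he.1
    rw [M.ground_eq] at this ⊢
    exact (Sym2.isDiag_map σ.injective).not.mpr this
  · rw [← image_insert_eq] at hind
    have := he.2 (by simpa [image_image, Sym2.map_map] using M.invariant σ⁻¹ _ hind)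
    exact mem_image_of_mem _ this

theorem not_clique_subset_closure (hu : M.Unbounded) {X : Set (Sym2 ℕ)} (hX : X.Finite)
    {W : Set ℕ} (hW : W.Infinite) : ¬ clique W ⊆ M.M.closure X := by
  intro hcl
  obtain ⟨n, hn⟩ := hu X.ncard
  unfold rk mrk at hn
  obtain ⟨_, ⟨J, hJn, hJ, rfl⟩, hXJ⟩ := exists_lt_of_lt_csSup
    (⟨0, ∅, empty_subset _, M.M.empty_indep, ncard_empty _⟩ :
      Set.Nonempty {k | ∃ I ⊆ cliqueN n, M.M.Indep I ∧ I.ncard = k}) hn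
  let f : ℕ → ℕ := fun v => hW.natEmbedding _ v
  have hf : f.Injective := fun u v h => hW.natEmbedding _ |>.injective (Subtype.ext h)
  obtain ⟨σ, hσ⟩ := exists_perm_eqOn_of_injOn (finite_lt_nat n) hf.injOn
  have hσJ : Sym2.map σ '' J ⊆ clique W := by
    rintro _ ⟨e, he, rfl⟩
    exact map_mem_clique σ.injective (fun v hv => hσ hv ▸ (hW.natEmbedding _ v).2) (hJn he)
  have hle := (M.invariant σ J hJ).encard_le_of_subset_closure (hσJ.trans hcl)
  rw [(Sym2.map.injective σ.injective).encard_image, ← (finite_of_ncard_pos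
    (Nat.zero_lt_of_lt hXJ)).cast_ncard_eq, ← hX.cast_ncard_eq] at hle
  exact (Nat.cast_le.mp hle).not_gt hXJ

theorem indep_of_isStar_of_isStar {m : ℕ} {E E' : Set (Sym2 ℕ)} (hE : IsStar m E)
    (hE' : IsStar m E') (h : M.Indep E) : M.Indep E' := by
  classical
  obtain ⟨c, L, hc, rfl, rfl⟩ := hE
  obtain ⟨c', L', hc', hL', rfl⟩ := hE'
  obtain ⟨g⟩ : Nonempty (L ≃ L') := ⟨L.equivOfCardEq hL'.symm⟩
  let f : ℕ → ℕ := fun v => if hv : v ∈ L then g ⟨v, hv⟩ else c'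
  have hfc : f c = c' := dif_neg hc
  have hfL : ∀ v (hv : v ∈ L), f v = g ⟨v, hv⟩ := fun v hv => dif_pos hv
  have hf : InjOn f (insert c ↑L) := by
    rintro u (rfl | hu) v (rfl | hv) huv
    · rfl
    · rw [hfc, hfL v hv] at huv
      exact absurd (huv ▸ (g _).2) hc'
    · rw [hfc, hfL u hu] at huv
      exact absurd (huv.symm ▸ (g _).2) hc'
    · rw [hfL u hu, hfL v hv] at huv
      exact congrArg Subtype.val (g.injective (Subtype.ext huv))
  obtain ⟨σ, hσ⟩ := exists_perm_eqOn_of_injOn (toFinite _) hf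
  have himage : Sym2.map σ '' ((fun x => s(c, x)) '' ↑L) = (fun x => s(c', x)) '' ↑L' := by
    rw [image_image]
    ext e
    simp only [mem_image, Finset.mem_coe, Sym2.map_mk]
    constructor
    · rintro ⟨v, hv, rfl⟩
      refine ⟨g ⟨v, hv⟩, (g _).2, ?_⟩
      rw [hσ (mem_insert c _), hσ (mem_insert_of_mem c hv), hfc, hfL v hv]
    · rintro ⟨w, hw, rfl⟩
      obtain ⟨⟨v, hv⟩, hvw⟩ := g.surjective ⟨w, hw⟩
      refine ⟨v, hv, ?_⟩
      rw [hσ (mem_insert c _), hσ (mem_insert_of_mem c hv), hfc, hfL v hv, hvw]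
  exact himage ▸ M.invariant σ _ h

theorem exists_isStar_threshold (h : ∃ m E, IsStar m E ∧ ¬ M.Indep E) :
    ∃ k, (∀ E, IsStar k E → M.Indep E) ∧ ∀ E, IsStar (k + 1) E → ¬ M.Indep E := by
  classical
  obtain ⟨E, hE, hdep⟩ := Nat.find_spec h
  have hpos : Nat.find h ≠ 0 := by
    intro h0
    obtain ⟨c, L, -, hL, rfl⟩ := h0 ▸ hE
    simp [Finset.card_eq_zero.mp hL, M.M.empty_indep, Indep] at hdep
  obtain ⟨k, hk⟩ := Nat.exists_eq_succ_of_ne_zero hpos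
  refine ⟨k, fun E' hE' => ?_,
    fun E' hE' hind => hdep (M.indep_of_isStar_of_isStar (hk ▸ hE') hE hind)⟩
  by_contra hdep'
  exact Nat.find_min h (hk ▸ k.lt_succ_self) ⟨E', hE', hdep'⟩

theorem mem_closure_of_not_indep_insert_pendant {I : Set (Sym2 ℕ)} {w x : ℕ} (hI : M.Indep I)
    (hw : w ∉ eSupp I) (hwx : w ≠ x) (hdep : ¬ M.Indep (insert s(w, x) I)) {z : ℕ}
    (hz : z ∉ eSupp I) (hzx : z ≠ x) : s(z, x) ∈ M.M.closure I := by
  refine M.mem_closure_of_not_indep_insert hI (by simpa using hzx) fun hind => hdep ?_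
  have hfix : ∀ v ∈ eSupp I, Equiv.swap z w v = v := fun v hv =>
    Equiv.swap_apply_of_ne_of_ne (ne_of_mem_of_not_mem hv hz) (ne_of_mem_of_not_mem hv hw)
  have := M.invariant (Equiv.swap z w) _ hind
  rwa [image_insert_eq, Sym2.map_mk, Equiv.swap_apply_left,
    Equiv.swap_apply_of_ne_of_ne hzx.symm hwx.symm, image_map_eq_self hfix] at this

theorem exists_not_indep_isStar {I : Set (Sym2 ℕ)} (hfin : I.Finite) {x : ℕ}
    (hcl : ∀ z ∉ eSupp I, z ≠ x → s(z, x) ∈ M.M.closure I) :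
    ∃ m E, IsStar m E ∧ ¬ M.Indep E := by
  obtain ⟨L, hL, hLcard⟩ :=
    ((eSupp_finite hfin).insert x).infinite_compl.exists_subset_card_eq (I.ncard + 1)
  have hxL : x ∉ L := fun h => hL h (mem_insert x _)
  refine ⟨_, _, ⟨x, L, hxL, hLcard, rfl⟩, fun hind => ?_⟩
  have hsub : (fun z => s(x, z)) '' ↑L ⊆ M.M.closure I := by
    rintro _ ⟨z, hz, rfl⟩
    have hz' : ¬ (z = x ∨ z ∈ eSupp I) := hL hz
    change s(x, z) ∈ _
    rw [Sym2.eq_swap]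
    exact hcl z (fun h => hz' (Or.inr h)) (fun h => hz' (Or.inl h))
  have hle := hind.encard_le_of_subset_closure hsub
  have hinj : Function.Injective fun z => s(x, z) := fun _ _ => Sym2.congr_right.mp
  rw [hinj.encard_image, encard_coe_eq_coe_finsetCard, hLcard, ← hfin.cast_ncard_eq] at hle
  norm_cast at hle
  omega

/-- If `I + wx` were dependent, then by symmetry `I` would span every edge from `x` to a new
vertex, so large stars would be dependent. At the threshold size `k` (`k`-stars independent,
`(k+1)`-stars dependent) a `k`-star spans every edge at its centre; using `k` copies of `I`, with
`y ∈ X` in the role of `x`, a finite set then spans every edge among the new vertices. -/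
theorem indep_insert_of_notMem_eSupp (hu : M.Unbounded) {I : Set (Sym2 ℕ)} (hI : M.Indep I)
    (hfin : I.Finite) {w x : ℕ} (hw : w ∉ eSupp I) (hwx : w ≠ x) :
    M.Indep (insert s(w, x) I) := by
  by_contra hdep
  have hcl := fun z => M.mem_closure_of_not_indep_insert_pendant hI hw hwx hdep (z := z)
  obtain ⟨k, hk, hk1⟩ := M.exists_isStar_threshold (M.exists_not_indep_isStar hfin hcl)
  let X := Finset.range k
  let U := ⋃ y ∈ X, Sym2.map (Equiv.swap x y) '' I
  have hU : U.Finite := X.finite_toSet.biUnion fun y _ => hfin.image _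
  refine M.not_clique_subset_closure hu hU
    ((eSupp_finite hfin).union (toFinite (insert x ↑X))).infinite_compl ?_
  rintro e ⟨hnd, he⟩
  induction e using Sym2.ind with | _ a b => ?_
  simp only [Sym2.mem_iff, forall_eq_or_imp, forall_eq, mem_compl_iff, mem_union, mem_insert_iff,
    Finset.mem_coe, not_or] at he
  obtain ⟨⟨haI, hax, haX⟩, hbI, hbx, hbX⟩ := he
  have hT : (fun y => s(a, y)) '' ↑X ⊆ M.M.closure U := by
    rintro _ ⟨y, hy, rfl⟩
    have hay : a ≠ y := fun h => haX (h ▸ hy)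
    have := M.map_mem_closure hI (Equiv.swap x y) (hcl a haI hax)
    rw [Sym2.map_mk, Equiv.swap_apply_of_ne_of_ne hax hay, Equiv.swap_apply_left] at this
    exact M.M.closure_subset_closure (subset_biUnion_of_mem (u := fun y => Sym2.map
      (Equiv.swap x y) '' I) hy) this
  have hab : s(a, b) ∈ M.M.closure ((fun y => s(a, y)) '' ↑X) := by
    refine M.mem_closure_of_not_indep_insert (hk _ ⟨a, X, haX, Finset.card_range k, rfl⟩) hnd
      (hk1 _ ⟨a, insert b X, ?_,
        by rw [Finset.card_insert_of_notMem hbX, Finset.card_range], ?_⟩)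
    · simpa [not_or] using ⟨fun h => hnd (h ▸ Sym2.mk_isDiag_iff.mpr rfl), haX⟩
    · rw [Finset.coe_insert, image_insert_eq]
  exact M.M.closure_subset_closure_of_subset_closure hT hab

/-- `e` is a bridge (coloop) of `M(G ∪ {e})`; `e` need not belong to `G`. -/
def IsBridge (G : Set (Sym2 ℕ)) (e : Sym2 ℕ) : Prop :=
  ∀ S ⊆ G, M.Indep S → M.Indep (insert e S)

theorem isBridge_of_forall_isCircuit {G : Set (Sym2 ℕ)} (hG : IsGraph G) {e : Sym2 ℕ}
    (he : e ∈ G) (hnc : ∀ C ⊆ G, M.IsCircuit C → e ∉ C) : M.IsBridge G e := by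
  intro S hSG hS
  by_contra hdep
  have hSG' : insert e S ⊆ G := insert_subset he hSG
  obtain ⟨C, hCS, hC⟩ := Matroid.Dep.exists_isCircuit_subset
    ⟨hdep, fun f hf => by rw [M.ground_eq]; exact hG.2 f (hSG' hf)⟩
  have hCG : C ⊆ G := hCS.trans hSG'
  have heC : e ∈ C := by
    by_contra heC
    exact hC.dep.not_indep (hS.subset ((subset_insert_iff_of_notMem heC).mp hCS))
  exact hnc C hCG ⟨⟨hG.1.subset hCG, fun f hf => hG.2 f (hCG hf)⟩, hC.dep.not_indep,
    fun f hf => hC.sdiff_singleton_indep hf⟩ heC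

theorem isBridge_of_notMem_eSupp (hu : M.Unbounded) {G : Set (Sym2 ℕ)} (hG : G.Finite)
    {p x : ℕ} (hp : p ∉ eSupp G) (hpx : p ≠ x) : M.IsBridge G s(p, x) :=
  fun _ hSG hS => M.indep_insert_of_notMem_eSupp hu hS (hG.subset hSG)
    (fun h => hp (eSupp_mono hSG h)) hpx

theorem matroidIso_swap {G : Set (Sym2 ℕ)} {e e' : Sym2 ℕ} (he : e ∈ G) (he' : e' ∉ G)
    (hb : M.IsBridge G e) (hb' : M.IsBridge (G \ {e}) e') :
    M.MatroidIso G (insert e' (G \ {e})) (Equiv.swap e e') := by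
  have hee' : e' ∉ ({e} : Set (Sym2 ℕ)) := fun h => he' (mem_singleton_iff.mp h ▸ he)
  refine ⟨?_, fun S hSG => ?_⟩
  · rw [← insert_sdiff_of_notMem _ hee', ← Equiv.image_swap_of_mem_of_notMem he he']
    exact (Equiv.swap e e').injective.injOn.bijOn_image
  have he'S : e' ∉ S := fun h => he' (hSG h)
  by_cases heS : e ∈ S
  · rw [Equiv.image_swap_of_mem_of_notMem heS he'S, insert_sdiff_of_notMem _ hee']
    refine ⟨fun h => hb' _ (sdiff_subset_sdiff_left hSG) (h.subset sdiff_subset), fun h => ?_⟩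
    have := hb _ (sdiff_subset.trans hSG) (h.subset (subset_insert _ _))
    rwa [insert_sdiff_singleton, insert_eq_of_mem heS] at this
  · have hfix : EqOn (Equiv.swap e e') id S := fun f hf =>
      Equiv.swap_apply_of_ne_of_ne (ne_of_mem_of_not_mem hf heS) (ne_of_mem_of_not_mem hf he'S)
    rw [image_congr hfix, image_id]

end GraphMatroidFamily

/-- If `M` is an unbounded graph matroid family and `G` is an
`M`-reconstructible graph with at least two edges, then `M(G)` has no bridges
(coloops): every edge of `G` lies in some `M`-circuit contained in `G`. -/
theorem reconstructible_bridgeless (M : GraphMatroidFamily) (hu : M.Unbounded)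
    (G : Set (Sym2 ℕ)) (hG : IsGraph G) (h2 : 2 ≤ G.ncard)
    (hrec : M.Reconstructible G) :
    ∀ e ∈ G, ∃ C : Set (Sym2 ℕ), C ⊆ G ∧ M.IsCircuit C ∧ e ∈ C := by
  intro e he
  by_contra! hnc
  have hb := M.isBridge_of_forall_isCircuit hG he hnc
  obtain ⟨f, hf, hfe⟩ := exists_ne_of_one_lt_ncard h2 e
  have hFfin : (G \ {e}).Finite := hG.1.sdiff
  induction e using Sym2.ind with | _ a b => ?_
  have hab : a ≠ b := fun h => hG.2 _ he (Sym2.mk_isDiag_iff.mpr h)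
  obtain ⟨p, x, hp, hpx, hcard⟩ := exists_ncard_eSupp_insert_ne hFfin ⟨f, hf, hfe⟩ hab
  rw [insert_sdiff_singleton, insert_eq_of_mem he] at hp hcard
  have hH : IsGraph (insert s(p, x) (G \ {s(a, b)})) :=
    ⟨hFfin.insert _, by
      rintro g (rfl | hg)
      · exact fun h => hpx (Sym2.mk_isDiag_iff.mp h)
      · exact hG.2 g hg.1⟩
  have hiso := M.matroidIso_swap he (fun h => hp ⟨_, h, Sym2.mem_mk_left p x⟩) hb
    (M.isBridge_of_notMem_eSupp hu hFfin (fun h => hp (eSupp_mono sdiff_subset h)) hpx)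
  obtain ⟨φ, hφ, -⟩ := hrec _ hH _ hiso
  exact hcard hφ.ncard_eq
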